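/- arXiv:1809.05632 — 2 statements merged into one kernel-verified Lean document; each statement's English description precedes it below -/
import Mathlib

section
/- Let N ≥ 2 be an even natural number. Then the sum, over all set partitions π of {1,…,N} all of whose blocks have even cardinality, of (−1)^{|π|} · ∏_{B ∈ π} (|B|−1)! (where |π| is the number of blocks of π), equals −(N−1)!! · (N−3)!!. -/
/-!
Absorb the sign and the parity condition into the block weight `f k = -(k-1)!` for even `k` and
`f k = 0` for odd `k`. Removing the block that contains a fixed point gives the recurrence
`w (n+1) = ∑ₖ C(n,k) f(k+1) w(n-k)` for the weighted sum `w n` over set partitions of an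
`n`-set.
Peeling the terms `k = 0, 1` off this convolution, the remaining ones are `(n+2)(n+1)` times the
convolution at `n - 2`, so the recurrence is solved by `w 0 = 1`, `w 1 = 0`,
`w (n+2) = (n+1)(n-1) w n`: these are `n!` times the Taylor coefficients of
`√(1 - x²) = exp (-∑_{k even} x^k / k)`, and their even terms are `-(n-1)‼ (n-3)‼`.
-/

/-- A finset of finsets is a partition of `Fin N` with all blocks of even
(nonzero) cardinality. -/
def IsEvenPartition (N : ℕ) (P : Finset (Finset (Fin N))) : Prop :=
  (∀ B ∈ P, B.Nonempty ∧ Even B.card) ∧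
  (∀ B ∈ P, ∀ C ∈ P, B ≠ C → Disjoint B C) ∧
  P.sup id = Finset.univ

open Finset Nat

section SetPartition

variable {α : Type*} [DecidableEq α]

theorem insert_sdiff_insert_of_notMem {a : α} {s : Finset α} (ha : a ∉ s) (t : Finset α) :
    insert a s \ insert a t = s \ t := by
  rw [insert_sdiff_insert, sdiff_insert_of_notMem ha]

def IsSetPartition (s : Finset α) (P : Finset (Finset α)) : Prop :=
  (∀ B ∈ P, B.Nonempty) ∧ (P : Set (Finset α)).PairwiseDisjoint id ∧ P.sup id = s

namespace IsSetPartition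

variable {s B : Finset α} {P : Finset (Finset α)}

theorem subset (h : IsSetPartition s P) (hB : B ∈ P) : B ⊆ s :=
  h.2.2 ▸ le_sup (f := id) hB

theorem exists_mem (h : IsSetPartition s P) {a : α} (ha : a ∈ s) : ∃ B ∈ P, a ∈ B := by
  rw [← h.2.2] at ha
  simpa using mem_sup.1 ha

theorem erase (h : IsSetPartition s P) (hB : B ∈ P) : IsSetPartition (s \ B) (P.erase B) := by
  refine ⟨fun C hC => h.1 C (mem_of_mem_erase hC), h.2.1.subset (by simp), ?_⟩
  ext x
  simp only [mem_sup, mem_erase, id, mem_sdiff]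
  constructor
  · rintro ⟨C, ⟨hCB, hC⟩, hxC⟩
    exact ⟨h.subset hC hxC, disjoint_left.1 (h.2.1 hC hB hCB) hxC⟩
  · rintro ⟨hxs, hxB⟩
    obtain ⟨C, hC, hxC⟩ := h.exists_mem hxs
    exact ⟨C, ⟨fun hCB => hxB (hCB ▸ hxC), hC⟩, hxC⟩

theorem notMem_of_sdiff {Q : Finset (Finset α)} (h : IsSetPartition (s \ B) Q)
    (hB : B.Nonempty) : B ∉ Q := fun hBQ => by
  obtain ⟨x, hx⟩ := hB
  exact (mem_sdiff.1 (h.subset hBQ hx)).2 hx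

theorem insert {Q : Finset (Finset α)} (h : IsSetPartition (s \ B) Q) (hBs : B ⊆ s)
    (hB : B.Nonempty) : IsSetPartition s (insert B Q) := by
  refine ⟨?_, ?_, ?_⟩
  · simpa [hB] using h.1
  · rw [coe_insert]
    exact h.2.1.insert fun C hC _ => disjoint_of_subset_right (h.subset hC) disjoint_sdiff
  · rw [sup_insert, h.2.2, id, sup_eq_union, union_sdiff_of_subset hBs]

end IsSetPartition

theorem isSetPartition_empty_iff {P : Finset (Finset α)} : IsSetPartition ∅ P ↔ P = ∅ := by
  refine ⟨fun h => eq_empty_of_forall_notMem fun B hB => ?_, ?_⟩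
  · obtain ⟨x, hx⟩ := h.1 B hB
    exact notMem_empty x (h.subset hB hx)
  · rintro rfl
    exact ⟨by simp, by simp, rfl⟩

open Classical in
noncomputable def setPartitions (s : Finset α) : Finset (Finset (Finset α)) :=
  s.powerset.powerset.filter (IsSetPartition s)

theorem mem_setPartitions {s : Finset α} {P : Finset (Finset α)} :
    P ∈ setPartitions s ↔ IsSetPartition s P := by
  classical
  rw [setPartitions, mem_filter, mem_powerset]
  exact ⟨And.right, fun h => ⟨fun B hB => mem_powerset.2 (h.subset hB), h⟩⟩

variable {R : Type*} [CommSemiring R]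

noncomputable def partitionSum (f : ℕ → R) (s : Finset α) : R :=
  ∑ P ∈ setPartitions s, ∏ B ∈ P, f #B

theorem partitionSum_empty (f : ℕ → R) : partitionSum f (∅ : Finset α) = 1 := by
  have : setPartitions (∅ : Finset α) = {∅} := by
    ext P
    rw [mem_setPartitions, isSetPartition_empty_iff, mem_singleton]
  rw [partitionSum, this, sum_singleton, prod_empty]

theorem partitionSum_insert (f : ℕ → R) {a : α} {s : Finset α} (ha : a ∉ s) :
    partitionSum f (insert a s) = ∑ C ∈ s.powerset, f (#C + 1) * partitionSum f (s \ C) := by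
  simp_rw [partitionSum, mul_sum]
  rw [sum_sigma']
  symm
  refine sum_bij (fun x _ => insert (insert a x.1) x.2) ?_ ?_ ?_ ?_
  · rintro ⟨C, Q⟩ hx
    simp only [mem_sigma, mem_powerset, mem_setPartitions] at hx ⊢
    rw [← insert_sdiff_insert_of_notMem ha] at hx
    exact hx.2.insert (insert_subset_insert a hx.1) (insert_nonempty a C)
  · rintro ⟨C, Q⟩ hx ⟨C', Q'⟩ hx' hCQ
    simp only [mem_sigma, mem_powerset, mem_setPartitions] at hx hx' hCQ
    have haC : a ∉ C := fun h => ha (hx.1 h)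
    have haC' : a ∉ C' := fun h => ha (hx'.1 h)
    rw [← insert_sdiff_insert_of_notMem ha] at hx hx'
    obtain hC | hCQ' := mem_insert.1 (hCQ ▸ mem_insert_self (insert a C) Q)
    · obtain rfl : C = C' := by rw [← erase_insert haC, hC, erase_insert haC']
      obtain rfl : Q = Q' := by
        rw [← erase_insert (hx.2.notMem_of_sdiff (insert_nonempty a C)), hCQ,
          erase_insert (hx'.2.notMem_of_sdiff (insert_nonempty a C))]
      rfl
    · have := hx'.2.subset hCQ' (mem_insert_self a C)
      exact absurd (mem_insert_self a C') (mem_sdiff.1 this).2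
  · intro P hP
    rw [mem_setPartitions] at hP
    obtain ⟨B, hB, haB⟩ := hP.exists_mem (mem_insert_self a s)
    refine ⟨⟨B.erase a, P.erase B⟩, ?_, ?_⟩
    · simp only [mem_sigma, mem_powerset, mem_setPartitions]
      rw [← insert_sdiff_insert_of_notMem ha, insert_erase haB]
      exact ⟨subset_insert_iff.1 (hP.subset hB), hP.erase hB⟩
    · rw [insert_erase haB, insert_erase hB]
  · rintro ⟨C, Q⟩ hx
    simp only [mem_sigma, mem_powerset, mem_setPartitions] at hx
    have haC : a ∉ C := fun h => ha (hx.1 h)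
    rw [← insert_sdiff_insert_of_notMem ha] at hx
    rw [prod_insert (hx.2.notMem_of_sdiff (insert_nonempty a C)), card_insert_of_notMem haC]

theorem partitionSum_eq_of_recurrence (f : ℕ → R) {w : ℕ → R} (h0 : w 0 = 1)
    (hrec : ∀ n, w (n + 1) = ∑ k ∈ range (n + 1), n.choose k * f (k + 1) * w (n - k))
    (s : Finset α) : partitionSum f s = w #s := by
  induction s using Finset.strongInduction with
  | H s ih =>
  obtain rfl | ⟨a, ha⟩ := s.eq_empty_or_nonempty
  · rw [partitionSum_empty, card_empty, h0]
  set t := s.erase a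
  have hat : a ∉ t := notMem_erase a s
  have hts : s = insert a t := (insert_erase ha).symm
  have hsub : ∀ C ∈ t.powerset, partitionSum f (t \ C) = w (#t - #C) := fun C hC => by
    rw [ih _ (sdiff_subset.trans_ssubset (erase_ssubset ha)),
      card_sdiff_of_subset (mem_powerset.1 hC)]
  rw [hts, partitionSum_insert f hat, sum_congr rfl fun C hC => by rw [hsub C hC],
    sum_powerset_apply_card (fun k => f (k + 1) * w (#t - k)), card_insert_of_notMem hat, hrec]
  simp only [nsmul_eq_mul, mul_assoc]

end SetPartition

def evenBlockWeight (k : ℕ) : ℤ := if Even k then -((k - 1)! : ℤ) else 0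

theorem evenBlockWeight_add_three (k : ℕ) :
    evenBlockWeight (k + 3) = (k + 2) * (k + 1) * evenBlockWeight (k + 1) := by
  simp only [evenBlockWeight, Nat.even_add, show ¬ Even 3 by decide, show ¬ Even 1 by decide]
  split_ifs
  · rw [show k + 3 - 1 = k + 1 + 1 by omega, factorial_succ, factorial_succ]
    push_cast
    ring
  · ring

theorem choose_mul_evenBlockWeight_add_three (n k : ℕ) :
    ((n + 2).choose (k + 2) : ℤ) * evenBlockWeight (k + 3) =
      (n + 2) * (n + 1) * (n.choose k * evenBlockWeight (k + 1)) := by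
  have h1 := congrArg (Nat.cast : ℕ → ℤ) (add_one_mul_choose_eq (n + 1) (k + 1))
  have h2 := congrArg (Nat.cast : ℕ → ℤ) (add_one_mul_choose_eq n k)
  push_cast at h1 h2
  rw [evenBlockWeight_add_three]
  linear_combination -evenBlockWeight (k + 1) * ((k + 1) * h1 + (n + 2) * h2)

theorem sum_choose_mul_evenBlockWeight_add_two (v : ℕ → ℤ) (n : ℕ) :
    ∑ k ∈ range (n + 3), ((n + 2).choose k : ℤ) * evenBlockWeight (k + 1) * v (n + 2 - k) =
      -(n + 2) * v (n + 1) + (n + 2) * (n + 1) *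
        ∑ k ∈ range (n + 1), (n.choose k : ℤ) * evenBlockWeight (k + 1) * v (n - k) := by
  have hterm (k : ℕ) :
      ((n + 2).choose (k + 2) : ℤ) * evenBlockWeight (k + 3) * v (n + 2 - (k + 2)) =
        (n + 2) * (n + 1) * ((n.choose k : ℤ) * evenBlockWeight (k + 1) * v (n - k)) := by
    rw [show n + 2 - (k + 2) = n - k by omega]
    linear_combination v (n - k) * choose_mul_evenBlockWeight_add_three n k
  have hw1 : evenBlockWeight 1 = 0 := by decide
  have hw2 : evenBlockWeight 2 = -1 := by decide
  rw [sum_range_succ', sum_range_succ', sum_congr rfl fun k _ => hterm k, mul_sum, zero_add,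
    hw1, hw2, choose_one_right, show n + 2 - 1 = n + 1 from rfl]
  push_cast
  ring

def sqrtCoeff : ℕ → ℤ
  | 0 => 1
  | 1 => 0
  | n + 2 => (n + 1) * (n - 1) * sqrtCoeff n

theorem sqrtCoeff_succ (n : ℕ) :
    sqrtCoeff (n + 1) = ∑ k ∈ range (n + 1),
      (n.choose k : ℤ) * evenBlockWeight (k + 1) * sqrtCoeff (n - k) := by
  induction n using Nat.twoStepInduction with
  | zero => decide
  | one => decide
  | more n ih _ =>
    rw [sum_choose_mul_evenBlockWeight_add_two, ← ih, sqrtCoeff]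
    push_cast
    ring

theorem sqrtCoeff_two_mul_add_two (m : ℕ) :
    sqrtCoeff (2 * m + 2) = -((2 * m + 1)‼ * (2 * m - 1)‼ : ℤ) := by
  induction m with
  | zero => decide
  | succ m ih =>
    rw [show 2 * (m + 1) + 2 = 2 * m + 2 + 2 by ring, sqrtCoeff, ih,
      show 2 * (m + 1) + 1 = 2 * m + 1 + 2 by ring, doubleFactorial_add_two,
      show 2 * (m + 1) - 1 = 2 * m + 1 by omega, doubleFactorial_add_one (2 * m)]
    push_cast
    ring

open Classical in
theorem sum_isEvenPartition_eq_partitionSum (N : ℕ) :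
    ∑ P ∈ Finset.univ.filter (fun P : Finset (Finset (Fin N)) => IsEvenPartition N P),
        (-1 : ℤ) ^ P.card * ∏ B ∈ P, (Nat.factorial (B.card - 1) : ℤ) =
      partitionSum evenBlockWeight (univ : Finset (Fin N)) := by
  have hP (P) : IsEvenPartition N P ↔ IsSetPartition univ P ∧ ∀ B ∈ P, Even #B := by
    simp only [IsEvenPartition, IsSetPartition, Set.PairwiseDisjoint, Set.Pairwise, mem_coe,
      Function.onFun, id, imp_and, forall_and]
    tauto
  rw [partitionSum, ← sum_filter_of_ne (s := setPartitions univ)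
    (p := fun P : Finset (Finset (Fin N)) => ∀ B ∈ P, Even #B)]
  · refine sum_congr (by ext P; simp [mem_setPartitions, hP]) fun P hP' => ?_
    have hw : ∀ B ∈ P, evenBlockWeight #B = -1 * ((#B - 1)! : ℤ) := fun B hB => by
      rw [evenBlockWeight, if_pos ((mem_filter.1 hP').2 B hB), neg_one_mul]
    rw [prod_congr rfl hw, prod_mul_distrib, prod_const]
  · intro P _ hne B hB
    by_contra hodd
    exact prod_ne_zero_iff.1 hne B hB (if_neg hodd)

open Classical in
/-- For even `N ≥ 2`, the sum over all set partitions `π` of `{1,…,N}` with all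
blocks of even cardinality of `(−1)^{|π|} ∏_{B∈π} (|B|−1)!` equals
`−(N−1)!! (N−3)!!`. -/
theorem stmt_3 (N : ℕ) (hN : 2 ≤ N) (hNe : Even N) :
    ∑ P ∈ Finset.univ.filter (fun P : Finset (Finset (Fin N)) => IsEvenPartition N P),
        (-1 : ℤ) ^ P.card * ∏ B ∈ P, (Nat.factorial (B.card - 1) : ℤ) =
      -(Nat.doubleFactorial (N - 1) * Nat.doubleFactorial (N - 3) : ℤ) := by
  obtain ⟨m, rfl⟩ : ∃ m, N = 2 * m + 2 := by
    obtain ⟨c, hc⟩ := hNe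
    exact ⟨c - 1, by omega⟩
  rw [sum_isEvenPartition_eq_partitionSum,
    partitionSum_eq_of_recurrence evenBlockWeight rfl sqrtCoeff_succ, Finset.card_univ,
    Fintype.card_fin, sqrtCoeff_two_mul_add_two, show 2 * m + 2 - 1 = 2 * m + 1 by omega,
    show 2 * m + 2 - 3 = 2 * m - 1 by omega]
end

section
/- Let N ≥ 2 be even and let 0 ≤ s ≤ N/2 − 1. For a set partition π of {1,…,N} into blocks of even cardinalities, let |π| be its number of blocks and w(π) = ∏_{B ∈ π}(|B|−1)!. Then Σ_π (−1)^{|π|} · C(|π|−1, s) · w(π) = (−1)^{s+1} (N−1)!! · e_{N/2−1−s}(1, 3, 5, …, N−3), where the sum is over all set partitions of {1,…,N} with all blocks of even size, C(·,·) is the binomial coefficient, and e_j denotes the elementary symmetric polynomial of degree j evaluated at the listed odd numbers. -/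
/-!
Removing the block that contains a fixed point shows that the weighted count
`F_s(x) = ∑_π w(π) x^|π|` over the even partitions `π` of a finite set `s` depends only on
`m = #s` and satisfies `F_{m+1} = x ∑_{j odd} m(m-1)⋯(m-j+1) F_{m-j}`. The sequence with
`F_0 = 1`, `F_1 = 0`, `F_{m+2} = (m+1)(x+m) F_m` satisfies the same recursion, so on a set with
`2n` elements `F(x) = (2n-1)‼ x(x+2)⋯(x+2n-2)`.

Substituting `x = -(1+X)` and dividing by `1+X` turns `F` into
`∑_π (-1)^|π| w(π) (1+X)^(|π|-1)`, whose coefficient of `X^s` is the sum in question, while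
the product becomes `-(N-1)‼ ∏_{r=1}^{N/2-1} (2r-1-X)`, whose coefficients are given by Vieta's
formula.
-/

open Finset Nat

variable {α : Type*} [DecidableEq α]

def IsEvenPartitionOf (s : Finset α) (P : Finset (Finset α)) : Prop :=
  (∀ B ∈ P, B.Nonempty ∧ Even #B) ∧
  (∀ B ∈ P, ∀ C ∈ P, B ≠ C → Disjoint B C) ∧
  P.sup id = s

def blockOf (a : α) (P : Finset (Finset α)) : Finset α :=
  {B ∈ P | a ∈ B}.sup id

namespace IsEvenPartitionOf

variable {s : Finset α} {P : Finset (Finset α)} {B : Finset α}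

theorem subset (h : IsEvenPartitionOf s P) (hB : B ∈ P) : B ⊆ s :=
  h.2.2 ▸ le_sup (f := id) hB

theorem exists_mem (h : IsEvenPartitionOf s P) {a : α} (ha : a ∈ s) : ∃ B ∈ P, a ∈ B := by
  rw [← h.2.2] at ha
  simpa using mem_sup.1 ha

theorem blockOf_eq (h : IsEvenPartitionOf s P) (hB : B ∈ P) {a : α} (ha : a ∈ B) :
    blockOf a P = B := by
  have : {C ∈ P | a ∈ C} = {B} := by
    ext C
    simp only [mem_filter, mem_singleton]
    refine ⟨fun ⟨hC, haC⟩ => ?_, fun hCB => hCB ▸ ⟨hB, ha⟩⟩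
    by_contra hCB
    exact disjoint_left.1 (h.2.1 C hC B hB hCB) haC ha
  rw [blockOf, this, sup_singleton, id]

theorem erase (h : IsEvenPartitionOf s P) (hB : B ∈ P) :
    IsEvenPartitionOf (s \ B) (P.erase B) := by
  refine ⟨fun C hC => h.1 C (mem_of_mem_erase hC),
    fun C hC D hD => h.2.1 C (mem_of_mem_erase hC) D (mem_of_mem_erase hD), ?_⟩
  have hdisj : Disjoint B ((P.erase B).sup id) :=
    Finset.disjoint_sup_right.2 fun C hC =>
      h.2.1 B hB C (mem_of_mem_erase hC) (ne_of_mem_erase hC).symm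
  have hsplit : B ∪ (P.erase B).sup id = s := by
    conv_rhs => rw [← h.2.2, ← insert_erase hB, sup_insert]
    rfl
  rw [← hsplit, union_sdiff_cancel_left hdisj]

theorem insert_of_subset (h : IsEvenPartitionOf (s \ B) P) (hBs : B ⊆ s) (hB : B.Nonempty)
    (hBe : Even #B) : IsEvenPartitionOf s (insert B P) := by
  have hdisj : ∀ C ∈ P, Disjoint B C := fun C hC => disjoint_sdiff.mono_right (h.subset hC)
  refine ⟨?_, ?_, by rw [sup_insert, h.2.2]; exact union_sdiff_of_subset hBs⟩
  · intro C hC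
    rcases mem_insert.1 hC with rfl | hC
    exacts [⟨hB, hBe⟩, h.1 C hC]
  · intro C hC D hD hCD
    rcases mem_insert.1 hC with rfl | hCP
    · exact hdisj D ((mem_insert.1 hD).resolve_left hCD.symm)
    rcases mem_insert.1 hD with rfl | hDP
    exacts [(hdisj C hCP).symm, h.2.1 C hCP D hDP hCD]

theorem notMem_of_sdiff (h : IsEvenPartitionOf (s \ B) P) (hB : B.Nonempty) : B ∉ P :=
  fun hBP => hB.ne_empty (disjoint_self.1 (disjoint_sdiff.mono_right (h.subset hBP)))

end IsEvenPartitionOf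

open Classical in
noncomputable def evenPartitions (s : Finset α) : Finset (Finset (Finset α)) :=
  {P ∈ s.powerset.powerset | IsEvenPartitionOf s P}

theorem mem_evenPartitions {s : Finset α} {P : Finset (Finset α)} :
    P ∈ evenPartitions s ↔ IsEvenPartitionOf s P := by
  classical
  rw [evenPartitions, mem_filter, mem_powerset, and_iff_right_iff_imp]
  exact fun h B hB => mem_powerset.2 (h.subset hB)

theorem evenPartitions_empty : evenPartitions (∅ : Finset α) = {∅} := by
  ext P
  rw [mem_evenPartitions, mem_singleton]
  refine ⟨fun h => eq_empty_of_forall_notMem fun B hB => ?_, ?_⟩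
  · exact (h.1 B hB).1.ne_empty (subset_empty.1 (h.subset hB))
  · rintro rfl
    exact ⟨by simp, by simp, by simp⟩

variable {R : Type*} [CommSemiring R] (x : R)

noncomputable def evenPartitionSum (s : Finset α) : R :=
  ∑ P ∈ evenPartitions s, (∏ B ∈ P, ((#B - 1)! : R)) * x ^ #P

theorem evenPartitionSum_eq_sum_blocks {s : Finset α} {a : α} (ha : a ∈ s) :
    evenPartitionSum x s =
      x * ∑ B ∈ s.powerset with a ∈ B ∧ Even #B,
        ((#B - 1)! : R) * evenPartitionSum x (s \ B) := by
  simp only [evenPartitionSum, mul_sum]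
  rw [sum_sigma']
  refine sum_nbij' (fun P => ⟨blockOf a P, P.erase (blockOf a P)⟩) (fun p => insert p.1 p.2)
    ?_ ?_ ?_ ?_ ?_
  · intro P hP
    have hP := mem_evenPartitions.1 hP
    obtain ⟨B, hB, haB⟩ := hP.exists_mem ha
    simp only [mem_sigma, mem_filter, mem_powerset, hP.blockOf_eq hB haB, mem_evenPartitions]
    exact ⟨⟨hP.subset hB, haB, (hP.1 B hB).2⟩, hP.erase hB⟩
  · rintro ⟨B, Q⟩ hBQ
    simp only [mem_sigma, mem_filter, mem_powerset, mem_evenPartitions] at hBQ ⊢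
    obtain ⟨⟨hBs, haB, hBe⟩, hQ⟩ := hBQ
    exact hQ.insert_of_subset hBs ⟨a, haB⟩ hBe
  · intro P hP
    have hP := mem_evenPartitions.1 hP
    obtain ⟨B, hB, haB⟩ := hP.exists_mem ha
    simp only [hP.blockOf_eq hB haB, insert_erase hB]
  · rintro ⟨B, Q⟩ hBQ
    simp only [mem_sigma, mem_filter, mem_powerset, mem_evenPartitions] at hBQ
    obtain ⟨⟨hBs, haB, hBe⟩, hQ⟩ := hBQ
    have hBQ' := hQ.insert_of_subset hBs ⟨a, haB⟩ hBe
    simp only [hBQ'.blockOf_eq (mem_insert_self B Q) haB,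
      erase_insert (hQ.notMem_of_sdiff ⟨a, haB⟩)]
  · intro P hP
    have hP := mem_evenPartitions.1 hP
    obtain ⟨B, hB, haB⟩ := hP.exists_mem ha
    simp only [hP.blockOf_eq hB haB]
    conv_lhs => rw [← insert_erase hB]
    rw [prod_insert (notMem_erase B P), card_insert_of_notMem (notMem_erase B P)]
    ring

theorem evenPartitionSum_insert {s : Finset α} {a : α} (ha : a ∉ s) :
    evenPartitionSum x (insert a s) =
      x * ∑ C ∈ s.powerset, if Odd #C then ((#C)! : R) * evenPartitionSum x (s \ C) else 0 := by
  rw [evenPartitionSum_eq_sum_blocks x (mem_insert_self a s), sum_filter, sum_powerset_insert ha]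
  congr 1
  rw [sum_eq_zero fun C hC => if_neg fun h => ha (mem_powerset.1 hC h.1), zero_add]
  refine sum_congr rfl fun C hC => ?_
  have haC : a ∉ C := fun h => ha (mem_powerset.1 hC h)
  simp only [mem_insert_self, true_and, card_insert_of_notMem haC, Nat.even_add_one,
    not_even_iff_odd, Nat.add_sub_cancel, insert_sdiff_insert, sdiff_insert_of_notMem ha]

def evenPartitionClosedForm : ℕ → R
  | 0 => 1
  | 1 => 0
  | m + 2 => (m + 1) * (x + m) * evenPartitionClosedForm m

theorem evenPartitionClosedForm_two_mul (n : ℕ) :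
    evenPartitionClosedForm x (2 * n) = ((2 * n - 1)‼ : R) * ∏ r ∈ range n, (x + 2 * r) := by
  induction n with
  | zero => simp [evenPartitionClosedForm]
  | succ n ih =>
    rw [show 2 * (n + 1) = 2 * n + 2 by ring, evenPartitionClosedForm, ih, prod_range_succ,
      show 2 * n + 2 - 1 = 2 * n + 1 by omega, doubleFactorial_add_one]
    push_cast
    ring

theorem evenPartitionClosedForm_succ : ∀ m : ℕ,
    evenPartitionClosedForm x (m + 1) =
      x * ∑ j ∈ range (m + 1),
        (m.descFactorial j : R) * if Odd j then evenPartitionClosedForm x (m - j) else 0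
  | 0 => by simp [evenPartitionClosedForm]
  | 1 => by simp [evenPartitionClosedForm, sum_range_succ]
  | m + 2 => by
    have shift : ∀ j ∈ range (m + 1),
        ((m + 2).descFactorial (j + 1 + 1) : R) *
            (if Odd (j + 1 + 1) then evenPartitionClosedForm x (m + 2 - (j + 1 + 1)) else 0) =
          (m + 2) * (m + 1) * ((m.descFactorial j : R) *
            if Odd j then evenPartitionClosedForm x (m - j) else 0) := by
      intro j _
      simp only [succ_descFactorial_succ, Nat.odd_add_one, not_not,
        Nat.add_sub_add_right]
      push_cast
      ring
    rw [sum_range_succ', sum_range_succ', sum_congr rfl shift, ← mul_sum,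
      show m + 2 + 1 = (m + 1) + 2 from rfl, evenPartitionClosedForm]
    simp only [zero_add, descFactorial_one, descFactorial_zero, odd_one, not_odd_zero, if_true,
      if_false, Nat.reduceSubDiff, mul_zero, add_zero, evenPartitionClosedForm_succ m]
    push_cast
    ring

theorem evenPartitionSum_eq_closedForm (s : Finset α) :
    evenPartitionSum x s = evenPartitionClosedForm x #s := by
  induction s using Finset.strongInduction with
  | H s ih =>
  rcases s.eq_empty_or_nonempty with rfl | ⟨a, ha⟩
  · simp [evenPartitionSum, evenPartitions_empty, evenPartitionClosedForm]
  set t := s.erase a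
  have hat : a ∉ t := notMem_erase a s
  have hrest : ∀ C ∈ t.powerset,
      evenPartitionSum x (t \ C) = evenPartitionClosedForm x (#t - #C) := fun C hC => by
    rw [ih _ (sdiff_subset.trans_ssubset (erase_ssubset ha)),
      card_sdiff_of_subset (mem_powerset.1 hC)]
  rw [← insert_erase ha, evenPartitionSum_insert x hat, card_insert_of_notMem hat,
    evenPartitionClosedForm_succ, sum_congr rfl fun C hC => by rw [hrest C hC],
    sum_powerset_apply_card fun j =>
      if Odd j then (j ! : R) * evenPartitionClosedForm x (#t - j) else 0]
  refine congrArg (x * ·) (sum_congr rfl fun j _ => ?_)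
  rw [nsmul_eq_mul, descFactorial_eq_factorial_mul_choose]
  split_ifs <;> push_cast <;> ring

open Polynomial

theorem coeff_prod_C_sub_X {ι S : Type*} [CommRing S] (t : Finset ι) (f : ι → S) {k : ℕ}
    (hk : k ≤ #t) :
    (∏ i ∈ t, (C (f i) - X)).coeff k =
      (-1) ^ k * ∑ u ∈ t.powersetCard (#t - k), ∏ i ∈ u, f i := by
  have hneg : ∏ i ∈ t, (C (f i) - X) = C ((-1) ^ #t) * ∏ i ∈ t, (X + C (-f i)) := by
    rw [map_pow, map_neg, map_one, ← prod_neg]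
    exact prod_congr rfl fun i _ => by rw [map_neg]; ring
  have hsign : ((-1) ^ #t * (-1) ^ (#t - k) : S) = (-1) ^ k := by
    rw [← pow_add, show #t + (#t - k) = 2 * (#t - k) + k by omega, pow_add, pow_mul, neg_one_sq,
      one_pow, one_mul]
  rw [hneg, coeff_C_mul, prod_X_add_C_coeff t _ hk, mul_sum, mul_sum]
  refine sum_congr rfl fun u hu => ?_
  rw [prod_neg, (mem_powersetCard.1 hu).2, ← mul_assoc, hsign]

theorem sum_evenPartitions_X_add_one_pow {s : Finset α} {m : ℕ} (hs : #s = 2 * (m + 1)) :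
    ∑ P ∈ evenPartitions s,
        C ((-1) ^ #P * ∏ B ∈ P, ((#B - 1)! : ℤ)) * (X + 1) ^ (#P - 1) =
      -((2 * m + 1)‼ : ℤ[X]) * ∏ r ∈ Icc 1 m, (C ((2 * r - 1 : ℕ) : ℤ) - X) := by
  have hcard : ∀ P ∈ evenPartitions s, 1 ≤ #P := by
    intro P hP
    refine one_le_card.2 (nonempty_iff_ne_empty.2 fun hP0 => ?_)
    have := (mem_evenPartitions.1 hP).2.2
    rw [hP0, sup_empty] at this
    simp [← this] at hs
  have hprod : ∏ r ∈ range (m + 1), (-(X + 1) + 2 * (r : ℤ[X])) =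
      -(X + 1) * ∏ r ∈ Icc 1 m, (C ((2 * r - 1 : ℕ) : ℤ) - X) := by
    rw [prod_range_eq_mul_Ico _ (by omega : 0 < m + 1), Ico_add_one_right_eq_Icc]
    congr 1
    · simp
    · refine prod_congr rfl fun r hr => ?_
      rw [Nat.cast_sub (by linarith [(mem_Icc.1 hr).1])]
      simp only [map_sub, map_natCast]
      push_cast
      ring
  have hX : (X + 1 : ℤ[X]) ≠ 0 := by simpa using X_add_C_ne_zero (1 : ℤ)
  refine mul_left_cancel₀ hX ?_
  have hsum := evenPartitionSum_eq_closedForm (-(X + 1) : ℤ[X]) s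
  rw [hs, evenPartitionClosedForm_two_mul, hprod, evenPartitionSum,
    show 2 * (m + 1) - 1 = 2 * m + 1 by omega] at hsum
  have hterm : ∀ P ∈ evenPartitions s,
      (X + 1) * (C ((-1) ^ #P * ∏ B ∈ P, ((#B - 1)! : ℤ)) * (X + 1) ^ (#P - 1)) =
        (∏ B ∈ P, ((#B - 1)! : ℤ[X])) * (-(X + 1)) ^ #P := by
    intro P hP
    obtain ⟨k, hk⟩ : ∃ k, #P = k + 1 := ⟨#P - 1, by have := hcard P hP; omega⟩
    simp only [hk, Nat.add_sub_cancel, neg_pow (X + 1 : ℤ[X]), map_mul, map_pow, map_neg, map_one,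
      map_prod, map_natCast]
    ring
  rw [mul_sum, sum_congr rfl hterm, hsum]
  ring

open Classical in
/-- For even `N ≥ 2` and `0 ≤ s ≤ N/2 − 1`, the sum over all set partitions `π`
of `{1,…,N}` into blocks of even cardinality of
`(−1)^{|π|} C(|π|−1, s) ∏_{B∈π}(|B|−1)!` equals
`(−1)^{s+1} (N−1)!! e_{N/2−1−s}(1,3,…,N−3)`, where the elementary symmetric
polynomial is expressed as a sum over subsets of `{1,…,N/2−1}` of size
`N/2−1−s` of the products `∏_{r∈S}(2r−1)`. -/
theorem stmt_4 (N s : ℕ) (hN : 2 ≤ N) (hNe : Even N) (hs : s ≤ N / 2 - 1) :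
    ∑ P ∈ Finset.univ.filter (fun P : Finset (Finset (Fin N)) => IsEvenPartition N P),
        (-1 : ℤ) ^ P.card * (Nat.choose (P.card - 1) s : ℤ) *
          ∏ B ∈ P, (Nat.factorial (B.card - 1) : ℤ) =
      (-1 : ℤ) ^ (s + 1) * (Nat.doubleFactorial (N - 1) : ℤ) *
        ∑ S ∈ (Finset.Icc 1 (N / 2 - 1)).powersetCard (N / 2 - 1 - s),
          ∏ r ∈ S, ((2 * r - 1 : ℕ) : ℤ) := by
  obtain ⟨m, rfl⟩ : ∃ m, N = 2 * (m + 1) :=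
    ⟨N / 2 - 1, by obtain ⟨r, hr⟩ := hNe; omega⟩
  rw [show 2 * (m + 1) / 2 - 1 = m by omega] at hs ⊢
  have hfilter : univ.filter (fun P : Finset (Finset (Fin (2 * (m + 1)))) => IsEvenPartition _ P) =
      evenPartitions univ := by
    ext P
    rw [mem_evenPartitions, mem_filter]
    exact and_iff_right (mem_univ P)
  have hcoeff := congrArg (coeff · s)
    (sum_evenPartitions_X_add_one_pow (s := (univ : Finset (Fin (2 * (m + 1))))) (m := m) (by simp))
  simp only [finsetSum_coeff, coeff_C_mul, coeff_X_add_one_pow, neg_mul, coeff_neg,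
    ← C_eq_natCast, Nat.card_Icc, Nat.add_sub_cancel,
    coeff_prod_C_sub_X (Icc 1 m) (fun r => ((2 * r - 1 : ℕ) : ℤ)) (k := s) (by simpa using hs)]
    at hcoeff
  rw [hfilter, show 2 * (m + 1) - 1 = 2 * m + 1 by omega, pow_succ]
  calc _ = ∑ P ∈ evenPartitions univ,
          ((-1) ^ #P * ∏ B ∈ P, ((#B - 1)! : ℤ)) * ((#P - 1).choose s : ℤ) :=
        sum_congr rfl fun P _ => mul_right_comm _ _ _
    _ = _ := by rw [hcoeff]; ring
end
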